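/- arXiv:2109.06173 — 5 statements merged into one kernel-verified Lean document; each statement's English description precedes it below -/
import Mathlib

section
/- Let T be a compact Hausdorff space, A a unital C*-algebra, and C(T) a unital C*-subalgebra of A. If a, b ∈ A both have the property that φ a ψ = 0 and φ b ψ = 0 for all φ, ψ ∈ C(T) with disjoint supports, then the product ab also satisfies φ (ab) ψ = 0 for all φ, ψ ∈ C(T) with disjoint supports. -/
/-- If `a, b` in a unital C*-algebra `A` containing `C(T)` (for `T` compact
Hausdorff) both satisfy the strong Simonenko local property (`φ a ψ = 0` whenever
`φ, ψ ∈ C(T)` have disjoint supports), then so does the product `a * b`. -/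
theorem product_has_strong_simonenko_local_property
    {T : Type*} [TopologicalSpace T] [CompactSpace T] [T2Space T]
    {A : Type*} [NormedRing A] [StarRing A] [CStarRing A] [NormedAlgebra ℂ A]
    [StarModule ℂ A] [CompleteSpace A]
    (ι : C(T, ℂ) →⋆ₐ[ℂ] A) (hι : Function.Injective ι)
    (a b : A)
    (ha : ∀ φ ψ : C(T, ℂ), Disjoint (tsupport ⇑φ) (tsupport ⇑ψ) → ι φ * a * ι ψ = 0)
    (hb : ∀ φ ψ : C(T, ℂ), Disjoint (tsupport ⇑φ) (tsupport ⇑ψ) → ι φ * b * ι ψ = 0) :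
    ∀ φ ψ : C(T, ℂ), Disjoint (tsupport ⇑φ) (tsupport ⇑ψ) → ι φ * (a * b) * ι ψ = 0 := by
  intro φ ψ hdisj
  -- separate the supports by disjoint open sets
  obtain ⟨U, V, hU, hV, hφU, hψV, hUV⟩ :=
    normal_separation (isClosed_tsupport ⇑φ) (isClosed_tsupport ⇑ψ) hdisj
  -- shrink: open W with supp φ ⊆ W ⊆ closure W ⊆ U
  obtain ⟨W, hW, hφW, hWU⟩ :=
    normal_exists_closure_subset (isClosed_tsupport ⇑φ) hU hφU
  -- Urysohn-type function: χ supported in U, equal to 1 on closure W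
  obtain ⟨χ, hχU, hχ1, _⟩ :=
    exists_tsupport_one_of_isOpen_isClosed hU isClosed_closure.isCompact
      isClosed_closure hWU
  -- complexify χ
  set χc : C(T, ℂ) := ⟨fun t => (χ t : ℂ), by fun_prop⟩ with hχc
  have hsupp : tsupport ⇑χc = tsupport ⇑χ := by
    have hs : Function.support ⇑χc = Function.support ⇑χ := by
      ext t; simp [hχc, Function.mem_support]
    simp only [tsupport, hs]
  -- `1 - χc` has support disjoint from supp φ
  have h1 : Disjoint (tsupport ⇑φ) (tsupport ⇑((1 : C(T, ℂ)) - χc)) := by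
    have hvan : ∀ t ∈ W, ((1 : C(T, ℂ)) - χc) t = 0 := by
      intro t ht
      have : χ t = 1 := hχ1 (subset_closure ht)
      simp [hχc, this]
    have hsub : tsupport ⇑((1 : C(T, ℂ)) - χc) ⊆ Wᶜ := by
      apply closure_minimal _ (isClosed_compl_iff.mpr hW)
      intro t ht
      simp only [Set.mem_compl_iff]
      intro htW
      exact ht (hvan t htW)
    exact Set.disjoint_left.mpr fun t htφ ht2 => (hsub ht2) (hφW htφ)
  -- χc has support disjoint from supp ψ
  have h2 : Disjoint (tsupport ⇑χc) (tsupport ⇑ψ) := by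
    rw [hsupp]
    exact Set.disjoint_left.mpr fun t ht1 ht2 =>
      Set.disjoint_left.mp hUV (hχU ht1) (hψV ht2)
  have e1 : ι φ * a * ι ((1 : C(T, ℂ)) - χc) = 0 := ha _ _ h1
  have e2 : ι χc * b * ι ψ = 0 := hb _ _ h2
  have key : ι φ * (a * b) * ι ψ =
      (ι φ * a * ι ((1 : C(T, ℂ)) - χc)) * (b * ι ψ) + (ι φ * a) * (ι χc * b * ι ψ) := by
    rw [map_sub, map_one]
    noncomm_ring
  rw [key, e1, e2]
  simp
end

section
/- Let T be a compact Hausdorff space and A a unital C*-algebra containing C(T) as a unital C*-subalgebra. If π : B → L(H) is an irreducible representation of a C*-subalgebra B of A containing C(T), and for all a ∈ B and all φ, ψ ∈ C(T) with disjoint supports one has φ a ψ = 0, then for any φ, ψ ∈ C(T) with disjoint supports, either π(φ) = 0 or π(ψ) = 0. -/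
/-- Let `C(T) ⊆ B ⊆ A` with `T` compact Hausdorff and `A` a unital C*-algebra.
If `π : B → L(H)` is an irreducible representation (every nonzero vector is cyclic) and every
`a ∈ B` satisfies `φ a ψ = 0` for `φ, ψ ∈ C(T)` of disjoint support, then for any such pair
`φ, ψ` we have `π(φ) = 0` or `π(ψ) = 0`. -/
theorem irreducible_rep_kills_one_of_disjointly_supported
    {T : Type*} [TopologicalSpace T] [CompactSpace T] [T2Space T]
    {A : Type*} [NormedRing A] [StarRing A] [CStarRing A] [NormedAlgebra ℂ A]
    [StarModule ℂ A] [CompleteSpace A]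
    (ι : C(T, ℂ) →⋆ₐ[ℂ] A) (hι : Function.Injective ι)
    (B : StarSubalgebra ℂ A) (hCT : ∀ φ : C(T, ℂ), ι φ ∈ B)
    {H : Type*} [NormedAddCommGroup H] [InnerProductSpace ℂ H] [CompleteSpace H]
    (π : B →⋆ₐ[ℂ] (H →L[ℂ] H))
    (hirr : ∀ v : H, v ≠ 0 → Dense (Set.range fun b : B => π b v))
    (hloc : ∀ (a : A), a ∈ B → ∀ φ ψ : C(T, ℂ),
      Disjoint (tsupport ⇑φ) (tsupport ⇑ψ) → ι φ * a * ι ψ = 0) :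
    ∀ φ ψ : C(T, ℂ), Disjoint (tsupport ⇑φ) (tsupport ⇑ψ) →
      π ⟨ι φ, hCT φ⟩ = 0 ∨ π ⟨ι ψ, hCT ψ⟩ = 0 := by
  intro φ ψ hdisj
  by_cases hψ : π ⟨ι ψ, hCT ψ⟩ = 0
  · exact Or.inr hψ
  · left
    obtain ⟨v, hv⟩ : ∃ v, π ⟨ι ψ, hCT ψ⟩ v ≠ 0 := by
      by_contra h
      push_neg at h
      exact hψ (ContinuousLinearMap.ext fun v => h v)
    have hdense := hirr _ hv
    have h0 : ∀ b : B, π ⟨ι φ, hCT φ⟩ (π b (π ⟨ι ψ, hCT ψ⟩ v)) = 0 := by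
      intro b
      have hz : (⟨ι φ, hCT φ⟩ : B) * b * ⟨ι ψ, hCT ψ⟩ = 0 :=
        Subtype.ext (hloc (b : A) b.2 φ ψ hdisj)
      calc π ⟨ι φ, hCT φ⟩ (π b (π ⟨ι ψ, hCT ψ⟩ v))
          = π ((⟨ι φ, hCT φ⟩ : B) * b * ⟨ι ψ, hCT ψ⟩) v := by
            simp [map_mul]
        _ = 0 := by rw [hz]; simp
    have hfun : (π ⟨ι φ, hCT φ⟩ : H → H) = (0 : H →L[ℂ] H) := by
      apply Continuous.ext_on hdense (π _).continuous (0 : H →L[ℂ] H).continuous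
      rintro _ ⟨b, rfl⟩
      exact h0 b
    exact ContinuousLinearMap.ext fun w => congrFun hfun w
end

section
/- Let T be a compact Hausdorff space, A a unital C*-algebra containing C(T) as a unital C*-subalgebra. An element a ∈ A satisfies φ a ψ = 0 for all φ, ψ ∈ C(T) with disjoint supports if and only if a commutes with every element of C(T). -/
/-!
Only the forward direction needs work. For a real function `F` with `0 ≤ F ≤ n`, the hats
`χᵢ = hat i ∘ F`, `i = 0, …, n`, form a partition of unity. If the plateau `pᵢ = plateau i ∘ F`
is `1` near the support of `χᵢ`, locality gives `pᵢ ⁅a, F⁆ χᵢ = ⁅a, F⁆ χᵢ` and lets one replace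
the unbounded `F - i` by `(F - i) pᵢ`, so that `⁅a, F⁆ χᵢ = ⁅a, (F - i) pᵢ⁆ χᵢ` with
`‖(F - i) pᵢ‖ ≤ 2`. Within a residue class of `i` modulo `4` the plateaus are mutually
orthogonal, so the C*-identity yields `‖∑ᵢ ⁅a, F⁆ χᵢ‖² ≤ (4‖a‖)² ‖∑ᵢ χᵢ²‖ ≤ (4‖a‖)²`.
Hence `‖⁅a, F⁆‖ ≤ 16 ‖a‖` for every real `F`, a bound that does not see the size of `F`;
applied to the multiples `m • F` it forces `⁅a, F⁆ = 0`. Complex functions are handled through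
their real and imaginary parts.
-/

namespace StrongSimonenko

open Finset

def ramp (u : ℝ) : ℝ := max 0 (min u 1)

@[fun_prop]
lemma continuous_ramp : Continuous ramp := by unfold ramp; fun_prop

lemma monotone_ramp : Monotone ramp := fun _ _ h => max_le_max le_rfl (min_le_min h le_rfl)

lemma ramp_nonneg (u : ℝ) : 0 ≤ ramp u := le_max_left _ _

lemma ramp_le_one (u : ℝ) : ramp u ≤ 1 := max_le zero_le_one (min_le_right _ _)

lemma ramp_of_nonpos {u : ℝ} (h : u ≤ 0) : ramp u = 0 :=
  max_eq_left ((min_le_left _ _).trans h)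

lemma ramp_of_one_le {u : ℝ} (h : 1 ≤ u) : ramp u = 1 := by
  rw [ramp, min_eq_right h, max_eq_right zero_le_one]

-- A difference of ramps, so that the hats centred at `0, 1, …, n` telescope.
def hat (c : ℝ) : C(ℝ, ℝ) :=
  ⟨fun u => ramp (u - c + 1) - ramp (u - c), by fun_prop⟩

lemma hat_apply (c u : ℝ) : hat c u = ramp (u - c + 1) - ramp (u - c) := rfl

lemma hat_nonneg (c u : ℝ) : 0 ≤ hat c u := sub_nonneg.2 (monotone_ramp (by linarith))

lemma hat_le_one (c u : ℝ) : hat c u ≤ 1 := by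
  rw [hat_apply]; linarith [ramp_le_one (u - c + 1), ramp_nonneg (u - c)]

lemma hat_eq_zero {c u : ℝ} (h : 1 ≤ |u - c|) : hat c u = 0 := by
  rcases le_abs'.1 h with h | h
  · rw [hat_apply, ramp_of_nonpos (by linarith), ramp_of_nonpos (by linarith), sub_self]
  · rw [hat_apply, ramp_of_one_le (by linarith), ramp_of_one_le h, sub_self]

lemma tsupport_hat_subset (c : ℝ) : tsupport (hat c) ⊆ Metric.closedBall c 1 := by
  refine closure_minimal (fun u hu => ?_) Metric.isClosed_closedBall
  by_contra h
  rw [Metric.mem_closedBall, Real.dist_eq, not_le] at h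
  exact hu (hat_eq_zero h.le)

lemma sum_hat_range {n : ℕ} {u : ℝ} (h0 : 0 ≤ u) (hn : u ≤ n) :
    ∑ i ∈ range (n + 1), hat i u = 1 := by
  have htele : ∀ i ∈ range (n + 1),
      hat i u = ramp (u - i + 1) - ramp (u - (i + 1 : ℕ) + 1) := by
    intro i _
    rw [hat_apply]; push_cast; ring_nf
  rw [sum_congr rfl htele, sum_range_sub', ramp_of_one_le (by push_cast; linarith),
    ramp_of_nonpos (by push_cast; linarith), sub_zero]

lemma sum_sq_hat_le {n : ℕ} {u : ℝ} (h0 : 0 ≤ u) (hn : u ≤ n) {s : Finset ℕ}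
    (hs : s ⊆ range (n + 1)) : ∑ i ∈ s, hat i u ^ 2 ≤ 1 :=
  calc ∑ i ∈ s, hat i u ^ 2 ≤ ∑ i ∈ s, hat i u :=
        sum_le_sum fun i _ => by nlinarith [hat_nonneg i u, hat_le_one i u]
    _ ≤ ∑ i ∈ range (n + 1), hat i u :=
        sum_le_sum_of_subset_of_nonneg hs fun i _ _ => hat_nonneg i u
    _ = 1 := sum_hat_range h0 hn

def plateau (c : ℝ) : C(ℝ, ℝ) :=
  ⟨fun u => ramp (4 - 2 * |u - c|), by fun_prop⟩

lemma plateau_apply (c u : ℝ) : plateau c u = ramp (4 - 2 * |u - c|) := rfl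

lemma plateau_nonneg (c u : ℝ) : 0 ≤ plateau c u := ramp_nonneg _

lemma plateau_eq_one {c u : ℝ} (h : |u - c| ≤ 3 / 2) : plateau c u = 1 :=
  ramp_of_one_le (by linarith)

lemma plateau_eq_zero {c u : ℝ} (h : 2 ≤ |u - c|) : plateau c u = 0 :=
  ramp_of_nonpos (by linarith)

lemma abs_sub_mul_plateau_le (c u : ℝ) : |(u - c) * plateau c u| ≤ 2 := by
  rw [abs_mul, abs_of_nonneg (plateau_nonneg c u)]
  rcases le_total 2 |u - c| with h | h
  · rw [plateau_eq_zero h, mul_zero]; norm_num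
  · nlinarith [plateau_nonneg c u, ramp_le_one (4 - 2 * |u - c|), plateau_apply c u]

lemma disjoint_tsupport_one_sub_plateau_hat (c : ℝ) :
    Disjoint (tsupport ⇑(1 - plateau c)) (tsupport (hat c)) := by
  refine Disjoint.mono_right (tsupport_hat_subset c) ?_
  have hclosed : IsClosed {u : ℝ | 3 / 2 ≤ |u - c|} :=
    isClosed_le continuous_const (by fun_prop)
  refine Disjoint.mono_left (closure_minimal (fun u hu => ?_) hclosed) ?_
  · by_contra h
    exact hu (by simp [plateau_eq_one (not_le.1 h).le])
  · refine Set.disjoint_left.2 fun u hu hu' => ?_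
    rw [Set.mem_ofPred_eq] at hu
    rw [Metric.mem_closedBall, Real.dist_eq] at hu'
    linarith

lemma plateau_mul_plateau {c d : ℝ} (h : 4 ≤ |c - d|) : plateau c * plateau d = 0 := by
  ext u
  have := abs_sub_le c u d
  rw [abs_sub_comm c u] at this
  rcases le_total 2 |u - c| with hc | hc
  · simp [plateau_eq_zero hc]
  · simp [plateau_eq_zero (show 2 ≤ |u - d| by linarith)]

lemma four_le_abs_sub_of_mod_eq {i j : ℕ} (hij : i ≠ j) (hmod : i % 4 = j % 4) :
    4 ≤ |(i : ℝ) - j| := by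
  wlog h : i < j generalizing i j
  · rw [abs_sub_comm]
    exact this hij.symm hmod.symm (by omega)
  have hgap : (i : ℝ) + 4 ≤ j := by exact_mod_cast (show i + 4 ≤ j by omega)
  rw [abs_sub_comm, abs_of_nonneg (by linarith)]
  linarith

section Locality

variable {T : Type*} [TopologicalSpace T] {R : Type*} [TopologicalSpace R] [CommRing R]
  [IsTopologicalRing R]

lemma mul_eq_zero_of_disjoint_tsupport {f g : C(T, R)} (h : Disjoint (tsupport f) (tsupport g)) :
    f * g = 0 := by
  ext t
  by_cases ht : t ∈ tsupport f
  · simp [image_eq_zero_of_notMem_tsupport (h.notMem_of_mem_left ht)]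
  · simp [image_eq_zero_of_notMem_tsupport ht]

lemma mul_eq_right_of_disjoint_tsupport_one_sub {p g : C(T, R)}
    (h : Disjoint (tsupport ⇑(1 - p)) (tsupport g)) : p * g = g := by
  have := mul_eq_zero_of_disjoint_tsupport h
  rwa [sub_mul, one_mul, sub_eq_zero, eq_comm] at this

variable {A : Type*} [Ring A] {F : Type*} [FunLike F C(T, R) A] [RingHomClass F C(T, R) A]
  {κ : F} {a : A}

lemma mul_mul_eq_zero_of_commute (hcomm : ∀ f, Commute a (κ f)) {f g : C(T, R)}
    (h : Disjoint (tsupport f) (tsupport g)) : κ f * a * κ g = 0 := by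
  rw [← (hcomm f).eq, mul_assoc, ← map_mul, mul_eq_zero_of_disjoint_tsupport h, map_zero,
    mul_zero]

variable (hloc : ∀ f g : C(T, R), Disjoint (tsupport f) (tsupport g) → κ f * a * κ g = 0)
include hloc

lemma mul_mul_eq_of_disjoint_tsupport_one_sub {p g : C(T, R)}
    (h : Disjoint (tsupport ⇑(1 - p)) (tsupport g)) : κ p * a * κ g = a * κ g := by
  have := hloc _ _ h
  rwa [map_sub, map_one, sub_mul, sub_mul, one_mul, sub_eq_zero, eq_comm] at this

lemma mul_lie_mul_eq_of_disjoint_tsupport_one_sub {p g : C(T, R)} (G : C(T, R))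
    (h : Disjoint (tsupport ⇑(1 - p)) (tsupport g)) :
    κ p * (⁅a, κ G⁆ * κ g) = ⁅a, κ G⁆ * κ g := by
  have hGg : κ p * a * κ (G * g) = a * κ (G * g) := mul_mul_eq_of_disjoint_tsupport_one_sub hloc
    (h.mono_right (by rw [ContinuousMap.coe_mul]; exact tsupport_mul_subset_right))
  have hg := mul_mul_eq_of_disjoint_tsupport_one_sub hloc h
  rw [map_mul] at hGg
  have hpG : κ p * κ G = κ G * κ p := by rw [← map_mul, mul_comm, map_mul]
  calc κ p * (⁅a, κ G⁆ * κ g) = κ p * a * (κ G * κ g) - κ G * (κ p * a * κ g) := by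
        rw [Ring.lie_def, ← mul_assoc (κ G), ← mul_assoc (κ G), ← hpG]; noncomm_ring
    _ = ⁅a, κ G⁆ * κ g := by rw [hGg, hg, Ring.lie_def]; noncomm_ring

lemma lie_mul_eq_lie_mul_mul_of_disjoint_tsupport_one_sub {p g : C(T, R)} (G : C(T, R))
    (h : Disjoint (tsupport ⇑(1 - p)) (tsupport g)) :
    ⁅a, κ G⁆ * κ g = ⁅a, κ (G * p)⁆ * κ g := by
  have hpg : κ p * κ g = κ g := by rw [← map_mul, mul_eq_right_of_disjoint_tsupport_one_sub h]
  have hg := mul_mul_eq_of_disjoint_tsupport_one_sub hloc h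
  calc ⁅a, κ G⁆ * κ g = a * κ G * (κ p * κ g) - κ G * (κ p * a * κ g) := by
        rw [hpg, hg, Ring.lie_def]; noncomm_ring
    _ = ⁅a, κ (G * p)⁆ * κ g := by rw [map_mul, Ring.lie_def]; noncomm_ring

end Locality

lemma norm_lie_le {A : Type*} [NonUnitalNormedRing A] (a b : A) :
    ‖⁅a, b⁆‖ ≤ 2 * ‖a‖ * ‖b‖ := by
  rw [Ring.lie_def]
  calc ‖a * b - b * a‖ ≤ ‖a‖ * ‖b‖ + ‖b‖ * ‖a‖ :=
        (norm_sub_le _ _).trans (add_le_add (norm_mul_le _ _) (norm_mul_le _ _))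
    _ = 2 * ‖a‖ * ‖b‖ := by ring

section CStarAlgebra

variable {A : Type*} [CStarAlgebra A] [PartialOrder A] [StarOrderedRing A]

lemma norm_sum_mul_sq_le {ι : Type*} (s : Finset ι) {y c : ι → A} {M : ℝ}
    (horth : ∀ i ∈ s, ∀ j ∈ s, i ≠ j → star (y i * c i) * (y j * c j) = 0)
    (hy : ∀ i ∈ s, ‖y i‖ ≤ M) :
    ‖∑ i ∈ s, y i * c i‖ ^ 2 ≤ M ^ 2 * ‖∑ i ∈ s, star (c i) * c i‖ := by
  have hdiag : star (∑ i ∈ s, y i * c i) * ∑ i ∈ s, y i * c i =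
      ∑ i ∈ s, star (y i * c i) * (y i * c i) := by
    rw [star_sum, sum_mul_sum]
    exact sum_congr rfl fun i hi =>
      sum_eq_single_of_mem i hi fun j hj hji => horth i hi j hj (Ne.symm hji)
  have hle : ∀ i ∈ s, star (y i * c i) * (y i * c i) ≤ M ^ 2 • (star (c i) * c i) := by
    intro i hi
    have hyy : star (y i) * y i ≤ algebraMap ℝ A (M ^ 2) :=
      CStarAlgebra.star_mul_le_algebraMap_norm_sq.trans
        (algebraMap_mono A (pow_le_pow_left₀ (norm_nonneg _) (hy i hi) 2))
    have := star_left_conjugate_le_conjugate hyy (c i)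
    rw [Algebra.algebraMap_eq_smul_one, mul_smul_comm, mul_one, smul_mul_assoc] at this
    simpa only [star_mul, mul_assoc] using this
  calc ‖∑ i ∈ s, y i * c i‖ ^ 2 = ‖∑ i ∈ s, star (y i * c i) * (y i * c i)‖ := by
        rw [sq, ← CStarRing.norm_star_mul_self, hdiag]
    _ ≤ ‖M ^ 2 • ∑ i ∈ s, star (c i) * c i‖ :=
        CStarAlgebra.norm_le_norm_of_nonneg_of_le
          (sum_nonneg fun i _ => star_mul_self_nonneg _) (by rw [smul_sum]; exact sum_le_sum hle)
    _ = M ^ 2 * ‖∑ i ∈ s, star (c i) * c i‖ := by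
        rw [norm_smul, Real.norm_of_nonneg (sq_nonneg M)]

end CStarAlgebra

lemma disjoint_tsupport_comp {X Y : Type*} [TopologicalSpace X] [TopologicalSpace Y]
    {f g : C(Y, ℝ)} (h : Disjoint (tsupport f) (tsupport g)) (F : C(X, Y)) :
    Disjoint (tsupport (f.comp F)) (tsupport (g.comp F)) :=
  (h.preimage F).mono (tsupport_comp_subset_preimage f F.continuous)
    (tsupport_comp_subset_preimage g F.continuous)

lemma sum_hat_comp_eq_one {X : Type*} [TopologicalSpace X] (F : C(X, ℝ)) {n : ℕ}
    (hF0 : ∀ t, 0 ≤ F t) (hFn : ∀ t, F t ≤ n) : ∑ i ∈ range (n + 1), (hat i).comp F = 1 := by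
  ext t
  simpa using sum_hat_range (hF0 t) (hFn t)

section Commutator

variable {T : Type*} [TopologicalSpace T] [CompactSpace T] {A : Type*} [CStarAlgebra A]
  {κ : C(T, ℝ) →⋆ₐ[ℝ] A} (hκ : ∀ f, ‖κ f‖ ≤ ‖f‖) {a : A}
  (hloc : ∀ f g : C(T, ℝ), Disjoint (tsupport f) (tsupport g) → κ f * a * κ g = 0)
include hκ hloc

lemma norm_sum_lie_mul_hat_le (F : C(T, ℝ)) {n : ℕ} (hF0 : ∀ t, 0 ≤ F t) (hFn : ∀ t, F t ≤ n)
    {s : Finset ℕ} (hs : s ⊆ range (n + 1))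
    (hsep : ∀ i ∈ s, ∀ j ∈ s, i ≠ j → 4 ≤ |(i : ℝ) - j|) :
    ‖∑ i ∈ s, ⁅a, κ F⁆ * κ ((hat i).comp F)‖ ≤ 4 * ‖a‖ := by
  let _ : PartialOrder A := CStarAlgebra.spectralOrder A
  let _ : StarOrderedRing A := CStarAlgebra.spectralOrderedRing A
  set p : ℕ → C(T, ℝ) := fun i => (plateau i).comp F
  set χ : ℕ → C(T, ℝ) := fun i => (hat i).comp F
  have hdisj (i : ℕ) : Disjoint (tsupport ⇑(1 - p i)) (tsupport (χ i)) := by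
    have := disjoint_tsupport_comp (disjoint_tsupport_one_sub_plateau_hat i) F
    rwa [ContinuousMap.sub_comp, ContinuousMap.one_comp] at this
  have hlie (i : ℕ) : ⁅a, κ F⁆ = ⁅a, κ (F - i)⁆ := by
    rw [map_sub, map_natCast, Ring.lie_def, Ring.lie_def, mul_sub, sub_mul,
      (Nat.cast_commute i a).eq]
    abel
  have hfactor (i : ℕ) : ⁅a, κ F⁆ * κ (χ i) = ⁅a, κ ((F - i) * p i)⁆ * κ (χ i) := by
    rw [hlie i, lie_mul_eq_lie_mul_mul_of_disjoint_tsupport_one_sub hloc _ (hdisj i)]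
  have horth : ∀ i ∈ s, ∀ j ∈ s, i ≠ j → star (⁅a, κ ((F - i) * p i)⁆ * κ (χ i)) *
      (⁅a, κ ((F - j) * p j)⁆ * κ (χ j)) = 0 := by
    intro i hi j hj hij
    have hpp : κ (p i) * κ (p j) = 0 := by
      rw [← map_mul, ← ContinuousMap.mul_comp, plateau_mul_plateau (hsep i hi j hj hij),
        ContinuousMap.zero_comp, map_zero]
    have hp : star (κ (p i)) = κ (p i) := by
      rw [← map_star]; congr 1
    rw [← hfactor, ← hfactor, ← mul_lie_mul_eq_of_disjoint_tsupport_one_sub hloc F (hdisj i),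
      ← mul_lie_mul_eq_of_disjoint_tsupport_one_sub hloc F (hdisj j), star_mul, hp]
    calc star (⁅a, κ F⁆ * κ (χ i)) * κ (p i) * (κ (p j) * (⁅a, κ F⁆ * κ (χ j)))
        = star (⁅a, κ F⁆ * κ (χ i)) * (κ (p i) * κ (p j)) * (⁅a, κ F⁆ * κ (χ j)) := by
          noncomm_ring
      _ = 0 := by rw [hpp, mul_zero, zero_mul]
  have hbound : ∀ i ∈ s, ‖⁅a, κ ((F - i) * p i)⁆‖ ≤ 4 * ‖a‖ := by
    intro i _
    have hw : ‖(F - i) * p i‖ ≤ 2 := (ContinuousMap.norm_le _ zero_le_two).2 fun t => by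
      simpa [p] using abs_sub_mul_plateau_le i (F t)
    nlinarith [norm_lie_le a (κ ((F - i) * p i)), hκ ((F - i) * p i), norm_nonneg a]
  have hsq : ‖∑ i ∈ s, star (κ (χ i)) * κ (χ i)‖ ≤ 1 := by
    simp_rw [← map_star, ← map_mul, ← map_sum]
    refine (hκ _).trans ((ContinuousMap.norm_le _ zero_le_one).2 fun t => ?_)
    simp only [χ, star_trivial, ContinuousMap.sum_apply, ContinuousMap.mul_apply,
      ContinuousMap.comp_apply]
    rw [Real.norm_of_nonneg (sum_nonneg fun i _ => mul_self_nonneg _)]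
    simpa only [sq] using sum_sq_hat_le (hF0 t) (hFn t) hs
  have key := norm_sum_mul_sq_le s horth hbound
  show ‖∑ i ∈ s, ⁅a, κ F⁆ * κ (χ i)‖ ≤ 4 * ‖a‖
  rw [sum_congr rfl fun i _ => hfactor i]
  nlinarith [norm_nonneg (∑ i ∈ s, ⁅a, κ ((F - i) * p i)⁆ * κ (χ i)), norm_nonneg a]

lemma norm_lie_le_of_nonneg (F : C(T, ℝ)) {n : ℕ} (hF0 : ∀ t, 0 ≤ F t) (hFn : ∀ t, F t ≤ n) :
    ‖⁅a, κ F⁆‖ ≤ 16 * ‖a‖ := by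
  have hpart : ⁅a, κ F⁆ = ∑ i ∈ range (n + 1), ⁅a, κ F⁆ * κ ((hat i).comp F) := by
    rw [← mul_sum, ← map_sum, sum_hat_comp_eq_one F hF0 hFn, map_one, mul_one]
  rw [hpart, ← sum_fiberwise_of_maps_to (g := (· % 4)) (t := range 4)
    fun i _ => mem_range.2 (Nat.mod_lt i four_pos)]
  calc _ ≤ ∑ r ∈ range 4,
        ‖∑ i ∈ (range (n + 1)).filter (· % 4 = r), ⁅a, κ F⁆ * κ ((hat i).comp F)‖ :=
        norm_sum_le _ _
    _ ≤ ∑ r ∈ range 4, 4 * ‖a‖ :=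
        sum_le_sum fun r _ => norm_sum_lie_mul_hat_le hκ hloc F hF0 hFn (filter_subset _ _)
          fun i hi j hj hij =>
            four_le_abs_sub_of_mod_eq hij ((mem_filter.1 hi).2.trans (mem_filter.1 hj).2.symm)
    _ = 16 * ‖a‖ := by rw [sum_const, card_range, nsmul_eq_mul]; ring

lemma norm_lie_le_sixteen_mul (f : C(T, ℝ)) : ‖⁅a, κ f⁆‖ ≤ 16 * ‖a‖ := by
  obtain ⟨N, hN⟩ := exists_nat_ge ‖f‖
  have hshift : ⁅a, κ (f + N)⁆ = ⁅a, κ f⁆ := by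
    rw [map_add, map_natCast, Ring.lie_def, Ring.lie_def, mul_add, add_mul,
      (Nat.cast_commute N a).eq]
    abel
  have hf (t : T) : |f t| ≤ N := (Real.norm_eq_abs _ ▸ f.norm_coe_le_norm t).trans hN
  rw [← hshift]
  refine norm_lie_le_of_nonneg hκ hloc (f + N) (n := 2 * N) (fun t => ?_) (fun t => ?_) <;>
  · simp only [ContinuousMap.add_apply, ContinuousMap.natCast_apply, Nat.cast_mul,
      Nat.cast_ofNat]
    linarith [abs_le.1 (hf t)]

lemma commute_of_forall_disjoint_tsupport (f : C(T, ℝ)) : Commute a (κ f) := by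
  rw [commute_iff_lie_eq, ← norm_le_zero_iff]
  by_contra! hpos
  obtain ⟨m, hm⟩ := exists_nat_gt (16 * ‖a‖ / ‖⁅a, κ f⁆‖)
  have hbound := norm_lie_le_sixteen_mul hκ hloc (m • f)
  rw [map_nsmul, Ring.lie_def, mul_smul_comm, smul_mul_assoc, ← smul_sub, ← Ring.lie_def,
    RCLike.norm_nsmul ℝ, nsmul_eq_mul] at hbound
  rw [div_lt_iff₀ hpos] at hm
  linarith

end Commutator

lemma tsupport_realToRCLike {X : Type*} [TopologicalSpace X] (f : C(X, ℝ)) :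
    tsupport (f.realToRCLike ℂ) = tsupport f := by
  simp [tsupport, Function.support]

lemma commute_of_forall_disjoint_tsupport_complex {T : Type*} [TopologicalSpace T]
    [CompactSpace T] {A : Type*} [CStarAlgebra A] (ι : C(T, ℂ) →⋆ₐ[ℂ] A) {a : A}
    (hloc : ∀ φ ψ : C(T, ℂ), Disjoint (tsupport φ) (tsupport ψ) → ι φ * a * ι ψ = 0)
    (φ : C(T, ℂ)) : Commute a (ι φ) := by
  set κ := (ι.restrictScalars ℝ).comp (ContinuousMap.realToRCLikeStarAlgHom T ℂ)
  have hκ (f : C(T, ℝ)) : ‖κ f‖ ≤ ‖f‖ :=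
    (NonUnitalStarAlgHom.norm_apply_le ι _).trans_eq
      ((ContinuousMap.isometry_realToRCLike T ℂ).norm_map_of_map_zero
        (map_zero (ContinuousMap.realToRCLikeStarAlgHom T ℂ)) f)
  have hcomm := commute_of_forall_disjoint_tsupport hκ fun f g h =>
    hloc _ _ (by rwa [← tsupport_realToRCLike f, ← tsupport_realToRCLike g] at h)
  rw [← realPart_add_I_smul_imaginaryPart φ, map_add, map_smul,
    ← ContinuousMap.IsSelfAdjoint.realToRCLike_rclikeToReal (realPart φ).2,
    ← ContinuousMap.IsSelfAdjoint.realToRCLike_rclikeToReal (imaginaryPart φ).2]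
  exact (hcomm _).add_right ((hcomm _).smul_right _)

end StrongSimonenko

theorem strong_simonenko_local_property_iff_commutes_general
    {T : Type*} [TopologicalSpace T] [CompactSpace T]
    {A : Type*} [NormedRing A] [StarRing A] [CStarRing A] [NormedAlgebra ℂ A]
    [StarModule ℂ A] [CompleteSpace A]
    (ι : C(T, ℂ) →⋆ₐ[ℂ] A) (a : A) :
    (∀ φ ψ : C(T, ℂ), Disjoint (tsupport ⇑φ) (tsupport ⇑ψ) → ι φ * a * ι ψ = 0) ↔
      (∀ φ : C(T, ℂ), Commute a (ι φ)) := by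
  let _ : CStarAlgebra A := { }
  exact ⟨StrongSimonenko.commute_of_forall_disjoint_tsupport_complex ι,
    fun h _ _ => StrongSimonenko.mul_mul_eq_zero_of_commute h⟩

/-- Lemma `lemma:commute`: an element `a` of a unital C*-algebra `A`
containing `C(T)` (for `T` compact Hausdorff) satisfies the strong Simonenko local property
iff `a` commutes with every element of `C(T)`. -/
theorem strong_simonenko_local_property_iff_commutes
    {T : Type*} [TopologicalSpace T] [CompactSpace T] [T2Space T]
    {A : Type*} [NormedRing A] [StarRing A] [CStarRing A] [NormedAlgebra ℂ A]
    [StarModule ℂ A] [CompleteSpace A]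
    (ι : C(T, ℂ) →⋆ₐ[ℂ] A) (hι : Function.Injective ι) (a : A) :
    (∀ φ ψ : C(T, ℂ), Disjoint (tsupport ⇑φ) (tsupport ⇑ψ) → ι φ * a * ι ψ = 0) ↔
      (∀ φ : C(T, ℂ), Commute a (ι φ)) :=
  strong_simonenko_local_property_iff_commutes_general ι a
end

section
/- Let G be a Hilbert space and T a compact Hausdorff space with a faithful non-degenerate unital representation φ ↦ M_φ of C(T) on G. Suppose P ∈ L(G) commutes with every M_φ modulo compact operators, and P is locally invertible at every point of T, meaning: for each x ∈ T there exist a neighbourhood V_x of x and operators Q₁ˣ, Q₂ˣ ∈ L(G) such that Q₁ˣ P M_φ = M_φ = M_φ P Q₂ˣ for all φ ∈ C(T) supported in V_x. Then P is a Fredholm operator. -/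
/-- Proposition `cor.loc.inv.implies.Fred`: let `T` be compact Hausdorff and
`φ ↦ M φ` a faithful unital representation of `C(T)` on a Hilbert space `𝒢`. If
`P ∈ L(𝒢)` commutes with every `M φ` modulo compacts and is locally invertible at every
point of `T`, then `P` is Fredholm (invertible modulo the compact operators). -/
theorem locally_invertible_implies_fredholm
    {T : Type*} [TopologicalSpace T] [CompactSpace T] [T2Space T]
    {𝒢 : Type*} [NormedAddCommGroup 𝒢] [InnerProductSpace ℂ 𝒢] [CompleteSpace 𝒢]
    (M : C(T, ℂ) →⋆ₐ[ℂ] (𝒢 →L[ℂ] 𝒢)) (hfaithful : Function.Injective M)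
    (P : 𝒢 →L[ℂ] 𝒢)
    (hcomm : ∀ φ : C(T, ℂ), IsCompactOperator ⇑(P * M φ - M φ * P))
    (hloc : ∀ x : T, ∃ V ∈ nhds x, ∃ Q₁ Q₂ : 𝒢 →L[ℂ] 𝒢,
      ∀ φ : C(T, ℂ), tsupport ⇑φ ⊆ V →
        Q₁ * P * M φ = M φ ∧ M φ * P * Q₂ = M φ) :
    ∃ Q : 𝒢 →L[ℂ] 𝒢,
      IsCompactOperator ⇑(P * Q - 1) ∧ IsCompactOperator ⇑(Q * P - 1) := by
  classical
  choose V hV Q₁ Q₂ hQ using hloc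
  -- a partition of unity subordinate to the covering by the interiors of the `V x`
  obtain ⟨f, hf⟩ := PartitionOfUnity.exists_isSubordinate (s := Set.univ) isClosed_univ
    (fun x => interior (V x)) (fun x => isOpen_interior)
    (fun x _ => Set.mem_iUnion.2 ⟨x, mem_interior_iff_mem_nhds.2 (hV x)⟩)
  have hfin : {i : T | (Function.support (f i)).Nonempty}.Finite :=
    f.locallyFinite.finite_nonempty_of_compact
  set S : Finset T := hfin.toFinset with hS
  -- complexifications of the partition functions
  set ψ : T → C(T, ℂ) := fun i =>
    (⟨Complex.ofReal, Complex.continuous_ofReal⟩ : C(ℝ, ℂ)).comp (f i) with hψ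
  have hψsupp : ∀ i, tsupport ⇑(ψ i) ⊆ V i := by
    intro i
    refine subset_trans ?_ (subset_trans (hf i) interior_subset)
    apply closure_mono
    intro x hx
    simp only [hψ, Function.mem_support, ContinuousMap.comp_apply] at hx ⊢
    intro h
    exact hx (by simp [h])
  have hsum : (∑ i ∈ S, ψ i) = 1 := by
    ext x
    have h1 : ∑ᶠ i, f i x = 1 := f.sum_eq_one (Set.mem_univ x)
    have h2 : ∑ᶠ i, f i x = ∑ i ∈ S, f i x := by
      apply finsum_eq_sum_of_support_subset
      intro i hi
      simp only [hS, Set.Finite.coe_toFinset]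
      exact ⟨x, hi⟩
    simp only [ContinuousMap.coe_sum, Finset.sum_apply, ContinuousMap.one_apply]
    have : ∀ i ∈ S, ψ i x = ((f i x : ℝ) : ℂ) := fun i _ => rfl
    rw [Finset.sum_congr rfl this, ← Complex.ofReal_sum, ← h2, h1, Complex.ofReal_one]
  have hM1 : (∑ i ∈ S, M (ψ i)) = 1 := by rw [← map_sum, hsum, map_one]
  -- closure properties of compact operators
  have Kmul_left : ∀ (B A : 𝒢 →L[ℂ] 𝒢), IsCompactOperator ⇑A →
      IsCompactOperator ⇑(B * A) := fun B A hA => hA.clm_comp B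
  have Kmul_right : ∀ (A B : 𝒢 →L[ℂ] 𝒢), IsCompactOperator ⇑A →
      IsCompactOperator ⇑(A * B) := fun A B hA => hA.comp_clm B
  have Kadd : ∀ (A B : 𝒢 →L[ℂ] 𝒢), IsCompactOperator ⇑A → IsCompactOperator ⇑B →
      IsCompactOperator ⇑(A + B) := fun A B hA hB => by
    exact hA.add hB
  have Ksub : ∀ (A B : 𝒢 →L[ℂ] 𝒢), IsCompactOperator ⇑A → IsCompactOperator ⇑B →
      IsCompactOperator ⇑(A - B) := fun A B hA hB => by
    exact hA.sub hB
  have Ksum : ∀ (g : T → (𝒢 →L[ℂ] 𝒢)), (∀ i ∈ S, IsCompactOperator ⇑(g i)) →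
      IsCompactOperator ⇑(∑ i ∈ S, g i) := fun g hg =>
    Finset.sum_induction g (fun A => IsCompactOperator ⇑A) Kadd
      isCompactOperator_zero hg
  have hcomm' : ∀ φ : C(T, ℂ), IsCompactOperator ⇑(M φ * P - P * M φ) := fun φ => by
    have e : M φ * P - P * M φ = -(P * M φ - M φ * P) := by noncomm_ring
    rw [e]
    exact (hcomm φ).neg
  -- approximate left and right inverses
  set QL : 𝒢 →L[ℂ] 𝒢 := ∑ i ∈ S, Q₁ i * M (ψ i) with hQL
  set QR : 𝒢 →L[ℂ] 𝒢 := ∑ i ∈ S, M (ψ i) * Q₂ i with hQR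
  have hQLP : IsCompactOperator ⇑(QL * P - 1) := by
    have h1 : (1 : 𝒢 →L[ℂ] 𝒢) = ∑ i ∈ S, Q₁ i * P * M (ψ i) := by
      rw [← hM1]; exact (Finset.sum_congr rfl fun i _ => (hQ i (ψ i) (hψsupp i)).1).symm
    have h2 : QL * P - 1 = ∑ i ∈ S, Q₁ i * (M (ψ i) * P - P * M (ψ i)) := by
      rw [h1, hQL, Finset.sum_mul, ← Finset.sum_sub_distrib]
      exact Finset.sum_congr rfl fun i _ => by noncomm_ring
    rw [h2]
    exact Ksum _ fun i _ => Kmul_left _ _ (hcomm' (ψ i))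
  have hPQR : IsCompactOperator ⇑(P * QR - 1) := by
    have h1 : (1 : 𝒢 →L[ℂ] 𝒢) = ∑ i ∈ S, M (ψ i) * P * Q₂ i := by
      rw [← hM1]; exact (Finset.sum_congr rfl fun i _ => (hQ i (ψ i) (hψsupp i)).2).symm
    have h2 : P * QR - 1 = ∑ i ∈ S, (P * M (ψ i) - M (ψ i) * P) * Q₂ i := by
      rw [h1, hQR, Finset.mul_sum, ← Finset.sum_sub_distrib]
      exact Finset.sum_congr rfl fun i _ => by noncomm_ring
    rw [h2]
    exact Ksum _ fun i _ => Kmul_right _ _ (hcomm (ψ i))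
  -- left and right approximate inverses agree modulo compacts
  have hdiff : IsCompactOperator ⇑(QR - QL) := by
    have h1 : IsCompactOperator ⇑(QL * P * QR - QR) := by
      have := Kmul_right _ QR hQLP
      have e : (QL * P - 1) * QR = QL * P * QR - QR := by noncomm_ring
      rwa [e] at this
    have h2 : IsCompactOperator ⇑(QL * P * QR - QL) := by
      have := Kmul_left QL _ hPQR
      have e : QL * (P * QR - 1) = QL * P * QR - QL := by noncomm_ring
      rwa [e] at this
    have := Ksub _ _ h2 h1
    have e : (QL * P * QR - QL) - (QL * P * QR - QR) = QR - QL := by noncomm_ring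
    rwa [e] at this
  refine ⟨QR, hPQR, ?_⟩
  have h3 : IsCompactOperator ⇑((QR - QL) * P + (QL * P - 1)) :=
    Kadd _ _ (Kmul_right _ P hdiff) hQLP
  have e : (QR - QL) * P + (QL * P - 1) = QR * P - 1 := by noncomm_ring
  rwa [e] at h3
end

section
/- Let G be a Hilbert space, T compact Hausdorff, with a unital representation φ ↦ M_φ of C(T) on G having the property of strong convergence to 0 (i.e., for each x ∈ T and each h ∈ G and ε > 0, there is a neighbourhood V' of x such that ‖M_χ h‖ < ε whenever χ ∈ C(T,[0,1]) is supported in V'). If P ∈ L(G) is Fredholm and commutes with all M_φ modulo compact operators, then P is locally invertible at every x ∈ T: there exist a neighbourhood V_x of x and operators Q₁ˣ, Q₂ˣ ∈ L(G) with Q₁ˣ P M_φ = M_φ = M_φ P Q₂ˣ for all φ ∈ C(T) supported in V_x. -/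
/-!
Let `Q` be a Fredholm regularizer of `P`, so `QP - 1` and `PQ - 1` are compact. Strong convergence
to `0` of `M χ`, as the support of `χ` shrinks to `x`, together with the uniform bound `‖M χ‖ ≤ 1`,
becomes norm convergence after composing with a compact operator, because strong convergence of a
bounded family is uniform on compact sets. Hence for a bump `χ` with small support
`1 + M χ (QP - 1) M χ` and `1 + M χ (PQ - 1) M χ` are invertible by the Neumann series. If `χ = 1`
near `x` and `φ` is supported there, then `M χ M φ = M φ`, and the local inverses are
`(1 + M χ (QP - 1) M χ)⁻¹ M χ Q` on the left and `Q M χ (1 + M χ (PQ - 1) M χ)⁻¹` on the right.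
-/

open Filter Topology Set

section UniformOnCompacts

variable {𝕜 E F : Type*} [NontriviallyNormedField 𝕜] [NormedAddCommGroup E] [NormedSpace 𝕜 E]
  [NormedAddCommGroup F] [NormedSpace 𝕜 F] {ι : Type*} {l : Filter ι} {A : ι → E →L[𝕜] F}

theorem tendstoUniformlyOn_zero_of_totallyBounded {C : ℝ}
    (hA : ∀ y, Tendsto (fun i ↦ A i y) l (𝓝 0)) (hbdd : ∀ᶠ i in l, ‖A i‖ ≤ C)
    {S : Set E} (hS : TotallyBounded S) :
    TendstoUniformlyOn (fun i y ↦ A i y) 0 l S := by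
  rw [Metric.tendstoUniformlyOn_iff]
  intro ε hε
  obtain ⟨δ, hδ, hCδ⟩ := exists_pos_mul_lt (half_pos hε) C
  obtain ⟨s, hs, hSs⟩ := Metric.totallyBounded_iff.mp hS δ hδ
  have hnet : ∀ᶠ i in l, ∀ y ∈ s, ‖A i y‖ < ε / 2 :=
    hs.eventually_all.2 fun y _ ↦ (hA y).norm.eventually (gt_mem_nhds (by simpa using half_pos hε))
  filter_upwards [hbdd, hnet] with i hAi hnet z hz
  obtain ⟨y, hy, hzy⟩ := mem_iUnion₂.mp (hSs hz)
  rw [Metric.mem_ball, dist_eq_norm] at hzy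
  rw [Pi.zero_apply, dist_zero_left]
  calc ‖A i z‖ = ‖A i y + A i (z - y)‖ := by rw [← map_add, add_sub_cancel]
    _ ≤ ‖A i y‖ + ‖A i‖ * ‖z - y‖ := norm_add_le_of_le le_rfl ((A i).le_opNorm _)
    _ < ε / 2 + C * δ := add_lt_add_of_lt_of_le (hnet y hy)
        ((mul_le_mul_of_nonneg_left hzy.le (norm_nonneg _)).trans
          (mul_le_mul_of_nonneg_right hAi hδ.le))
    _ < ε := by linarith

end UniformOnCompacts

section CompactOperator

variable {𝕜 E F G : Type*} [RCLike 𝕜] [NormedAddCommGroup E] [NormedSpace 𝕜 E]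
  [NormedAddCommGroup F] [NormedSpace 𝕜 F] [NormedAddCommGroup G] [NormedSpace 𝕜 G]

theorem tendsto_comp_of_isCompactOperator {ι : Type*} {l : Filter ι} {A : ι → F →L[𝕜] G} {C : ℝ}
    (hA : ∀ y, Tendsto (fun i ↦ A i y) l (𝓝 0)) (hbdd : ∀ᶠ i in l, ‖A i‖ ≤ C)
    {K : E →L[𝕜] F} (hK : IsCompactOperator K) :
    Tendsto (fun i ↦ (A i).comp K) l (𝓝 0) := by
  obtain ⟨S, hS, hKS⟩ := hK.image_closedBall_subset_compact 1
  have hunif := Metric.tendstoUniformlyOn_iff.mp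
    (tendstoUniformlyOn_zero_of_totallyBounded hA hbdd hS.totallyBounded)
  rw [Metric.tendsto_nhds]
  intro ε hε
  filter_upwards [hunif (ε / 2) (half_pos hε)] with i hi
  rw [dist_zero_right]
  refine lt_of_le_of_lt (ContinuousLinearMap.opNorm_le_of_unit_norm (half_pos hε).le
    fun v hv ↦ ?_) (half_lt_self hε)
  have hKv : K v ∈ S := hKS (mem_image_of_mem K (by simp [hv]))
  simpa using (hi _ hKv).le

end CompactOperator

section Ring

variable {R : Type*} [Ring R] {e f p q : R} {u : Rˣ}

theorem Units.inv_mul_mul_mul_mul_eq_of_val_eq (hef : e * f = f)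
    (hu : (u : R) = 1 + e * (q * p - 1) * e) : ↑u⁻¹ * e * q * p * f = f := by
  have : e * q * p * f = u * f := by
    simp only [hu, add_mul, one_mul, mul_assoc _ e f, hef, mul_sub, sub_mul, mul_one]
    noncomm_ring
  calc ↑u⁻¹ * e * q * p * f = ↑u⁻¹ * (e * q * p * f) := by simp only [mul_assoc]
    _ = f := by rw [this, ← mul_assoc, u.inv_mul, one_mul]

theorem Units.mul_mul_mul_mul_inv_eq_of_val_eq (hfe : f * e = f)
    (hu : (u : R) = 1 + e * (p * q - 1) * e) : f * p * (q * e * ↑u⁻¹) = f := by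
  have : f * p * q * e = f * u := by
    simp only [hu, mul_add, mul_one, ← mul_assoc, hfe, mul_sub, sub_mul]
    noncomm_ring
  simp only [← mul_assoc, this, mul_assoc f (u : R), u.mul_inv, mul_one]

end Ring

theorem isUnit_one_add_mul_mul {R : Type*} [NormedRing R] [HasSummableGeomSeries R] {e k : R}
    (he : ‖e‖ ≤ 1) (hek : ‖e * k‖ < 1) : IsUnit (1 + e * k * e) := by
  rw [← sub_neg_eq_add]
  refine isUnit_one_sub_of_norm_lt_one ?_
  calc ‖-(e * k * e)‖ ≤ ‖e * k‖ * ‖e‖ := (norm_neg _).trans_le (norm_mul_le _ _)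
    _ ≤ ‖e * k‖ * 1 := by gcongr
    _ < 1 := by rwa [mul_one]

section Bumps

variable {T : Type*} [TopologicalSpace T]

def unitBumpsSupportedIn (s : Set T) : Set C(T, ℂ) :=
  {χ | (∀ t, (χ t).im = 0 ∧ 0 ≤ (χ t).re ∧ (χ t).re ≤ 1) ∧ tsupport χ ⊆ s}

theorem monotone_unitBumpsSupportedIn : Monotone (unitBumpsSupportedIn (T := T)) :=
  fun _ _ hst _ hχ ↦ ⟨hχ.1, hχ.2.trans hst⟩

/-- Strong convergence to `0` of `M` at `x` in the sense of the paper says exactly that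
`M χ h → 0` along this filter, for every `h`. -/
def shrinkingBumps (x : T) : Filter C(T, ℂ) :=
  (𝓝 x).lift' unitBumpsSupportedIn

theorem hasBasis_shrinkingBumps (x : T) :
    (shrinkingBumps x).HasBasis (· ∈ 𝓝 x) unitBumpsSupportedIn :=
  (𝓝 x).basis_sets.lift' monotone_unitBumpsSupportedIn

theorem norm_le_one_of_mem_unitBumpsSupportedIn [CompactSpace T] {s : Set T} {χ : C(T, ℂ)}
    (hχ : χ ∈ unitBumpsSupportedIn s) : ‖χ‖ ≤ 1 := by
  refine (ContinuousMap.norm_le _ zero_le_one).mpr fun t ↦ ?_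
  obtain ⟨him, h0, h1⟩ := hχ.1 t
  rw [← Complex.re_add_im (χ t), him, Complex.ofReal_zero, zero_mul, add_zero,
    Complex.norm_real, Real.norm_of_nonneg h0]
  exact h1

theorem eventually_norm_map_le_one_shrinkingBumps [CompactSpace T] {A : Type*}
    [CStarAlgebra A] (M : C(T, ℂ) →⋆ₐ[ℂ] A) (x : T) :
    ∀ᶠ χ in shrinkingBumps x, ‖M χ‖ ≤ 1 :=
  (hasBasis_shrinkingBumps x).eventually_iff.mpr
    ⟨univ, univ_mem, fun _ hχ ↦ (NonUnitalStarAlgHom.norm_apply_le M _).trans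
      (norm_le_one_of_mem_unitBumpsSupportedIn hχ)⟩

theorem exists_mem_unitBumpsSupportedIn_mul_eq [CompactSpace T] [T2Space T] {x : T} {U : Set T}
    (hU : U ∈ 𝓝 x) : ∃ χ ∈ unitBumpsSupportedIn U, ∃ W ∈ 𝓝 x,
      ∀ φ : C(T, ℂ), tsupport φ ⊆ W → χ * φ = φ := by
  obtain ⟨V, hVU, hVopen, hxV⟩ := mem_nhds_iff.mp hU
  obtain ⟨W, hW, hWclosed, hWV⟩ := exists_mem_nhds_isClosed_subset (hVopen.mem_nhds hxV)
  obtain ⟨ψ, hψV, hψW, hψ01⟩ :=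
    exists_tsupport_one_of_isOpen_isClosed hVopen isClosed_closure.isCompact hWclosed hWV
  let χ : C(T, ℂ) := ⟨fun t ↦ ψ t, Complex.continuous_ofReal.comp ψ.continuous⟩
  have hsupp : tsupport χ = tsupport ψ := by
    unfold tsupport
    congr 1
    ext t
    simp [χ]
  refine ⟨χ, ⟨fun t ↦ ⟨Complex.ofReal_im _, (hψ01 t).1, (hψ01 t).2⟩, hsupp ▸ hψV.trans hVU⟩,
    interior W, interior_mem_nhds.mpr hW, fun φ hφ ↦ ?_⟩
  ext t
  by_cases ht : t ∈ tsupport φ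
  · simp [χ, hψW (interior_subset (hφ ht))]
  · simp [image_eq_zero_of_notMem_tsupport ht]

end Bumps

theorem fredholm_implies_locally_invertible_general
    {T : Type*} [TopologicalSpace T] [CompactSpace T] [T2Space T]
    {𝒢 : Type*} [NormedAddCommGroup 𝒢] [InnerProductSpace ℂ 𝒢] [CompleteSpace 𝒢]
    (M : C(T, ℂ) →⋆ₐ[ℂ] (𝒢 →L[ℂ] 𝒢))
    (hstrong : ∀ (x : T) (h : 𝒢) (ε : ℝ), 0 < ε → ∃ V' ∈ nhds x,
      ∀ χ : C(T, ℂ), (∀ t, (χ t).im = 0 ∧ 0 ≤ (χ t).re ∧ (χ t).re ≤ 1) →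
        tsupport ⇑χ ⊆ V' → ‖M χ h‖ < ε)
    (P : 𝒢 →L[ℂ] 𝒢)
    (hfred : ∃ Q : 𝒢 →L[ℂ] 𝒢,
      IsCompactOperator ⇑(P * Q - 1) ∧ IsCompactOperator ⇑(Q * P - 1)) :
    ∀ x : T, ∃ V ∈ nhds x, ∃ Q₁ Q₂ : 𝒢 →L[ℂ] 𝒢,
      ∀ φ : C(T, ℂ), tsupport ⇑φ ⊆ V →
        Q₁ * P * M φ = M φ ∧ M φ * P * Q₂ = M φ := by
  intro x
  obtain ⟨Q, hPQ, hQP⟩ := hfred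
  have hM : ∀ h, Tendsto (fun χ ↦ M χ h) (shrinkingBumps x) (𝓝 0) := fun h ↦
    (hasBasis_shrinkingBumps x).tendsto_iff Metric.nhds_basis_ball |>.mpr fun ε hε ↦
      let ⟨V, hV, hMV⟩ := hstrong x h ε hε
      ⟨V, hV, fun χ hχ ↦ by simpa using hMV χ hχ.1 hχ.2⟩
  have hsmall : ∀ K : 𝒢 →L[ℂ] 𝒢, IsCompactOperator K →
      ∀ᶠ χ in shrinkingBumps x, ‖M χ * K‖ < 1 := fun K hK ↦
    (tendsto_comp_of_isCompactOperator hM (eventually_norm_map_le_one_shrinkingBumps M x)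
      hK).norm.eventually (gt_mem_nhds (by simp))
  obtain ⟨U, hU, hUsmall⟩ := (hasBasis_shrinkingBumps x).eventually_iff.mp
    ((hsmall _ hPQ).and ((hsmall _ hQP).and (eventually_norm_map_le_one_shrinkingBumps M x)))
  obtain ⟨χ, hχU, W, hW, hχW⟩ := exists_mem_unitBumpsSupportedIn_mul_eq hU
  obtain ⟨hPQχ, hQPχ, hχ⟩ := hUsmall hχU
  obtain ⟨u₁, hu₁⟩ := isUnit_one_add_mul_mul hχ hPQχ
  obtain ⟨u₂, hu₂⟩ := isUnit_one_add_mul_mul hχ hQPχ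
  refine ⟨W, hW, ↑u₂⁻¹ * M χ * Q, Q * M χ * ↑u₁⁻¹, fun φ hφ ↦ ⟨?_, ?_⟩⟩
  · exact Units.inv_mul_mul_mul_mul_eq_of_val_eq (by rw [← map_mul, hχW φ hφ]) hu₂
  · exact Units.mul_mul_mul_mul_inv_eq_of_val_eq (by rw [← map_mul, mul_comm, hχW φ hφ]) hu₁

/-- converse direction of the general Simonenko localization principle:
if the unital representation `φ ↦ M φ` of `C(T)` on the Hilbert space `𝒢` has the property
of strong convergence to `0`, then every Fredholm operator `P` commuting with all `M φ`
modulo compact operators is locally invertible at every point of `T`. -/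
theorem fredholm_implies_locally_invertible
    {T : Type*} [TopologicalSpace T] [CompactSpace T] [T2Space T]
    {𝒢 : Type*} [NormedAddCommGroup 𝒢] [InnerProductSpace ℂ 𝒢] [CompleteSpace 𝒢]
    (M : C(T, ℂ) →⋆ₐ[ℂ] (𝒢 →L[ℂ] 𝒢))
    (hstrong : ∀ (x : T) (h : 𝒢) (ε : ℝ), 0 < ε → ∃ V' ∈ nhds x,
      ∀ χ : C(T, ℂ), (∀ t, (χ t).im = 0 ∧ 0 ≤ (χ t).re ∧ (χ t).re ≤ 1) →
        tsupport ⇑χ ⊆ V' → ‖M χ h‖ < ε)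
    (P : 𝒢 →L[ℂ] 𝒢)
    (hfred : ∃ Q : 𝒢 →L[ℂ] 𝒢,
      IsCompactOperator ⇑(P * Q - 1) ∧ IsCompactOperator ⇑(Q * P - 1))
    (hcomm : ∀ φ : C(T, ℂ), IsCompactOperator ⇑(P * M φ - M φ * P)) :
    ∀ x : T, ∃ V ∈ nhds x, ∃ Q₁ Q₂ : 𝒢 →L[ℂ] 𝒢,
      ∀ φ : C(T, ℂ), tsupport ⇑φ ⊆ V →
        Q₁ * P * M φ = M φ ∧ M φ * P * Q₂ = M φ :=
  fredholm_implies_locally_invertible_general M hstrong P hfred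
end
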